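/- Let Γ = G₀^{6,48,48} and let J be the 3×3 real symmetric (hence Hermitian) matrix [[1, √6/3, 0],[√6/3, 1, √6/3],[0, √6/3, 1]]; J is invertible and indefinite (there exist vectors v, w ∈ ℂ³ with v*Jv > 0 and w*Jw < 0, so the Hermitian form with Gram matrix J is nondegenerate of signature (2,1)). Then there exists a group homomorphism ρ : Γ → GL₃(ℂ) such that ρ(g)ᴴ · J · ρ(g) = J for every g ∈ Γ, the image of ρ acts irreducibly on ℂ³ (the only subspaces invariant under all ρ(g) are {0} and ℂ³), and the closure in GL₃(ℂ) of the range of ρ is not compact. In particular, Γ admits a representation into the unitary group U(2,1) of the Hermitian form J whose image does not have compact closure. -/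

import Mathlib

/-- The relators of the trivalent triangle group G₀^{6,48,48}:
a³, b³, c³, bab⁻¹a⁻¹, (cb)²(c⁻¹b⁻¹)², (ac)²(a⁻¹c⁻¹)². -/
def g64848Rels : Set (FreeGroup (Fin 3)) :=
  let a : FreeGroup (Fin 3) := FreeGroup.of 0
  let b : FreeGroup (Fin 3) := FreeGroup.of 1
  let c : FreeGroup (Fin 3) := FreeGroup.of 2
  {a ^ 3, b ^ 3, c ^ 3, b * a * b⁻¹ * a⁻¹,
   (c * b) ^ 2 * (c⁻¹ * b⁻¹) ^ 2, (a * c) ^ 2 * (a⁻¹ * c⁻¹) ^ 2}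

/-- The Gram matrix J = [[1, √6/3, 0], [√6/3, 1, √6/3], [0, √6/3, 1]]. -/
noncomputable def gramJ : Matrix (Fin 3) (Fin 3) ℂ :=
  !![1, ((Real.sqrt 6 / 3 : ℝ) : ℂ), 0;
     ((Real.sqrt 6 / 3 : ℝ) : ℂ), 1, ((Real.sqrt 6 / 3 : ℝ) : ℂ);
     0, ((Real.sqrt 6 / 3 : ℝ) : ℂ), 1]

/-!
The generators `a, b, c` act as the complex reflections `1 + (ω - 1) e eᴴJ` of order three in the
basis vectors `e₀, e₂, e₁`, which have `J`-norm one; such reflections are `J`-isometries. The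
relations only depend on the `J`-products of these vectors: `e₀ ⊥ e₂` makes `a` and `b` commute,
while `|⟪e₀, e₁⟫|² = |⟪e₁, e₂⟫|² = 2/3` is exactly the value for which two reflections of order
three satisfy the braid relation of length four. A nonzero invariant subspace contains some `eᵢ`
because `J` is invertible, and then all of them because the graph `e₀ — e₁ — e₂` of nonzero entries
of `J` is connected. Finally `ρ(abc²)` has the real eigenvalue `(3 + √5)/2 > 1`, so its powers leave
every compact set.
-/

open Matrix

theorem sq_one_add_smul_mul_one_add_smul_comm {K A : Type*} [CommRing K] [Ring A] [Algebra K A]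
    {P Q : A} {x t : K} (hP : IsIdempotentElem P) (hQ : IsIdempotentElem Q)
    (hPQP : P * Q * P = t • P) (hQPQ : Q * P * Q = t • Q)
    (hx : x ^ 2 * (2 + 2 * x + t * x ^ 2) = 0) :
    ((1 + x • P) * (1 + x • Q)) ^ 2 = ((1 + x • Q) * (1 + x • P)) ^ 2 := by
  have hP' (X : A) : X * P * P = X * P := by rw [mul_assoc, hP.eq]
  have hQ' (X : A) : X * Q * Q = X * Q := by rw [mul_assoc, hQ.eq]
  simp only [sq, mul_add, add_mul, one_mul, mul_one, smul_mul_assoc, mul_smul_comm, ← mul_assoc,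
    hP.eq, hQ.eq, hP', hQ', hPQP, hQPQ, smul_smul]
  -- the difference of the two sides is `x ^ 2 * (2 + 2 * x + t * x ^ 2) • (P * Q - Q * P)`
  linear_combination (norm := module) hx • (P * Q - Q * P)

section ComplexReflection

variable {K n : Type*} [Field K] [StarRing K] [Fintype n] {J : Matrix n n K}

variable (J) in
def lineProj (e : n → K) : Matrix n n K := vecMulVec e (star e ᵥ* J)

theorem lineProj_mul_lineProj (e f : n → K) :
    lineProj J e * lineProj J f = (star e ᵥ* J ⬝ᵥ f) • vecMulVec e (star f ᵥ* J) := by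
  rw [lineProj, lineProj, vecMulVec_mul_vecMulVec, vecMulVec_smul]

theorem isIdempotentElem_lineProj {e : n → K} (he : star e ᵥ* J ⬝ᵥ e = 1) :
    IsIdempotentElem (lineProj J e) := by
  rw [IsIdempotentElem, lineProj_mul_lineProj, he, one_smul, lineProj]

theorem lineProj_mul_lineProj_mul_lineProj (e f : n → K) :
    lineProj J e * lineProj J f * lineProj J e =
      ((star e ᵥ* J ⬝ᵥ f) * (star f ᵥ* J ⬝ᵥ e)) • lineProj J e := by
  rw [lineProj_mul_lineProj, smul_mul_assoc, lineProj, vecMulVec_mul_vecMulVec, vecMulVec_smul,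
    smul_smul]

variable [DecidableEq n]

variable (J) in
def complexReflection (e : n → K) (ζ : K) : Matrix n n K := 1 + (ζ - 1) • lineProj J e

theorem complexReflection_mulVec (e : n → K) (ζ : K) (v : n → K) :
    complexReflection J e ζ *ᵥ v = v + ((ζ - 1) * (star e ᵥ* J ⬝ᵥ v)) • e := by
  rw [complexReflection, lineProj, add_mulVec, one_mulVec, smul_mulVec, vecMulVec_mulVec,
    op_smul_eq_smul, smul_smul]

theorem complexReflection_mul {e : n → K} (he : star e ᵥ* J ⬝ᵥ e = 1) (ζ ξ : K) :
    complexReflection J e ζ * complexReflection J e ξ = complexReflection J e (ζ * ξ) := by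
  simp only [complexReflection, add_mul, mul_add, one_mul, mul_one, smul_mul_smul_comm,
    (isIdempotentElem_lineProj he).eq]
  module

def complexReflectionHom {e : n → K} (he : star e ᵥ* J ⬝ᵥ e = 1) : K →* Matrix n n K where
  toFun := complexReflection J e
  map_one' := by simp [complexReflection]
  map_mul' ζ ξ := (complexReflection_mul he ζ ξ).symm

theorem commute_complexReflection {e f : n → K} (hef : star e ᵥ* J ⬝ᵥ f = 0)
    (hfe : star f ᵥ* J ⬝ᵥ e = 0) (ζ ξ : K) :
    Commute (complexReflection J e ζ) (complexReflection J f ξ) := by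
  have hPQ : lineProj J e * lineProj J f = 0 := by rw [lineProj_mul_lineProj, hef, zero_smul]
  have hQP : lineProj J f * lineProj J e = 0 := by rw [lineProj_mul_lineProj, hfe, zero_smul]
  simp only [Commute, SemiconjBy, complexReflection, add_mul, mul_add, one_mul, mul_one,
    smul_mul_smul_comm, hPQ, hQP, smul_zero, add_zero]
  abel

theorem complexReflection_braid {e f : n → K} (he : star e ᵥ* J ⬝ᵥ e = 1)
    (hf : star f ᵥ* J ⬝ᵥ f = 1) {ζ : K}
    (hζ : (ζ - 1) ^ 2 * (2 + 2 * (ζ - 1) +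
      (star e ᵥ* J ⬝ᵥ f) * (star f ᵥ* J ⬝ᵥ e) * (ζ - 1) ^ 2) = 0) :
    (complexReflection J e ζ * complexReflection J f ζ) ^ 2 =
      (complexReflection J f ζ * complexReflection J e ζ) ^ 2 := by
  refine sq_one_add_smul_mul_one_add_smul_comm (isIdempotentElem_lineProj he)
    (isIdempotentElem_lineProj hf) (lineProj_mul_lineProj_mul_lineProj e f) ?_ hζ
  rw [lineProj_mul_lineProj_mul_lineProj, mul_comm]

theorem conjTranspose_complexReflection_mul_mul (hJ : J.IsHermitian) {e : n → K}
    (he : star e ᵥ* J ⬝ᵥ e = 1) {ζ : K} (hζ : star ζ * ζ = 1) :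
    (complexReflection J e ζ)ᴴ * J * complexReflection J e ζ = J := by
  have hP : (lineProj J e)ᴴ * J = J * lineProj J e := by
    rw [lineProj, conjTranspose_vecMulVec, vecMulVec_mul, mul_vecMulVec, star_vecMul, hJ.eq,
      star_star]
  have hJPP : J * lineProj J e * lineProj J e = J * lineProj J e := by
    rw [mul_assoc, (isIdempotentElem_lineProj he).eq]
  simp only [complexReflection, conjTranspose_add, conjTranspose_one, conjTranspose_smul,
    star_sub, star_one, add_mul, mul_add, one_mul, mul_one, smul_mul_assoc, mul_smul_comm, hP, hJPP]
  linear_combination (norm := module) hζ • (J * lineProj J e)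

theorem mem_of_complexReflection_mulVec_mem {W : Submodule K (n → K)} {e v : n → K} {ζ : K}
    (hζ : ζ ≠ 1) (hW : ∀ w ∈ W, complexReflection J e ζ *ᵥ w ∈ W) (hv : v ∈ W)
    (hev : star e ᵥ* J ⬝ᵥ v ≠ 0) : e ∈ W := by
  have h := W.sub_mem (hW v hv) hv
  rw [complexReflection_mulVec, add_sub_cancel_left] at h
  exact (W.smul_mem_iff (mul_ne_zero (sub_ne_zero.2 hζ) hev)).1 h

end ComplexReflection

section StandardBasis

variable {n : Type*} [Fintype n] [DecidableEq n]

theorem star_single_vecMul_dotProduct {R : Type*} [CommRing R] [StarRing R] (J : Matrix n n R)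
    (i : n) (v : n → R) : star (Pi.single i 1 : n → R) ᵥ* J ⬝ᵥ v = (J *ᵥ v) i := by
  rw [← Pi.single_star, star_one, single_one_vecMul]
  rfl

theorem star_single_vecMul_dotProduct_single {R : Type*} [CommRing R] [StarRing R]
    (J : Matrix n n R) (i j : n) : star (Pi.single i 1 : n → R) ᵥ* J ⬝ᵥ Pi.single j 1 = J i j := by
  rw [star_single_vecMul_dotProduct, mulVec_single_one]
  rfl

theorem Submodule.eq_top_of_forall_single_mem {K : Type*} [Field K] {W : Submodule K (n → K)}
    (h : ∀ i, Pi.single i 1 ∈ W) : W = ⊤ := by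
  rw [eq_top_iff, ← (Pi.basisFun K n).span_eq, Submodule.span_le]
  rintro _ ⟨i, rfl⟩
  simpa using h i

end StandardBasis

section GeneralLinearGroup

variable {n : Type*} [Fintype n] [DecidableEq n]

def isometryGroup {R : Type*} [CommRing R] [StarRing R] (J : Matrix n n R) :
    Subgroup (GL n R) where
  carrier := {g | (g : Matrix n n R)ᴴ * J * g = J}
  one_mem' := by simp
  mul_mem' {x y} hx hy := show (↑(x * y) : Matrix n n R)ᴴ * J * ↑(x * y) = J by
    calc (↑(x * y) : Matrix n n R)ᴴ * J * ↑(x * y)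
        = (↑y)ᴴ * ((↑x)ᴴ * J * ↑x) * ↑y := by
          simp only [Units.val_mul, conjTranspose_mul, mul_assoc]
      _ = J := by rw [hx, hy]
  inv_mem' {x} hx := show (↑x⁻¹ : Matrix n n R)ᴴ * J * ↑x⁻¹ = J by
    calc (↑x⁻¹ : Matrix n n R)ᴴ * J * ↑x⁻¹
        = (↑x⁻¹)ᴴ * ((↑x)ᴴ * J * ↑x) * ↑x⁻¹ := by rw [hx]
      _ = (↑x * ↑x⁻¹)ᴴ * J * (↑x * ↑x⁻¹) := by simp only [conjTranspose_mul, mul_assoc]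
      _ = J := by simp

theorem not_isCompact_closure_of_pow_mem {𝕜 : Type*} [NormedField 𝕜] {S : Set (GL n 𝕜)}
    {g : GL n 𝕜} (hS : ∀ k : ℕ, g ^ k ∈ S) {u : n → 𝕜} (hu : u ≠ 0) {μ : 𝕜}
    (hgu : (g : Matrix n n 𝕜) *ᵥ u = μ • u) (hμ : 1 < ‖μ‖) : ¬ IsCompact (closure S) := by
  intro hS_compact
  have hcont : Continuous fun h : GL n 𝕜 => (h : Matrix n n 𝕜) *ᵥ u :=
    Units.continuous_val.matrix_mulVec continuous_const
  obtain ⟨C, hC⟩ := isBounded_iff_forall_norm_le.1 (hS_compact.image hcont).isBounded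
  have hpow (k : ℕ) : ((g ^ k : GL n 𝕜) : Matrix n n 𝕜) *ᵥ u = μ ^ k • u := by
    induction k with
    | zero => simp
    | succ k ih =>
      rw [pow_succ, Units.val_mul, ← mulVec_mulVec, hgu, mulVec_smul, ih, smul_smul, ← pow_succ']
  obtain ⟨k, hk⟩ := pow_unbounded_of_one_lt (C / ‖u‖) hμ
  have hbound : ‖((g ^ k : GL n 𝕜) : Matrix n n 𝕜) *ᵥ u‖ ≤ C :=
    hC _ ⟨g ^ k, subset_closure (hS k), rfl⟩
  rw [hpow, norm_smul, norm_pow] at hbound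
  rw [div_lt_iff₀ (norm_pos_iff.2 hu)] at hk
  linarith

end GeneralLinearGroup

local notation "σ" => ((Real.sqrt 6 / 3 : ℝ) : ℂ)

theorem sq_sqrt_six_div_three : σ ^ 2 = 2 / 3 := by
  norm_cast
  rw [div_pow, Real.sq_sqrt (by norm_num)]
  norm_num

theorem gramJ_isHermitian : gramJ.IsHermitian := by
  ext i j
  fin_cases i <;> fin_cases j <;> simp [gramJ]

theorem det_gramJ : gramJ.det = -1 / 3 := by
  have hσ := sq_sqrt_six_div_three
  rw [gramJ]
  generalize σ = s at hσ ⊢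
  simp only [det_fin_three, of_apply, cons_val', cons_val_zero, cons_val_one, cons_val,
    cons_val_fin_one]
  linear_combination (-2 : ℂ) * hσ

theorem isUnit_gramJ : IsUnit gramJ := by
  rw [isUnit_iff_isUnit_det, det_gramJ]
  norm_num

theorem gramJ_mulVec_cons (x y z : ℂ) :
    gramJ *ᵥ ![x, y, z] = ![x + σ * y, σ * x + y + σ * z, σ * y + z] := by
  ext i
  fin_cases i <;> simp [gramJ, mulVec, dotProduct, Fin.sum_univ_three]

theorem gramJ_indefinite : ∃ v w : Fin 3 → ℂ,
    0 < (star v ⬝ᵥ gramJ *ᵥ v).re ∧ (star w ⬝ᵥ gramJ *ᵥ w).re < 0 := by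
  refine ⟨![1, 0, 0], ![1, -1, 1], ?_, ?_⟩
  · simp [gramJ_mulVec_cons, dotProduct, Fin.sum_univ_three]
  · have hw : star ![(1 : ℂ), -1, 1] ⬝ᵥ gramJ *ᵥ ![1, -1, 1] =
        ((3 - 4 * (Real.sqrt 6 / 3) : ℝ) : ℂ) := by
      simp only [gramJ_mulVec_cons, dotProduct, Fin.sum_univ_three, Pi.star_apply, cons_val_zero,
        cons_val_one, cons_val, star_one, star_neg]
      push_cast
      ring
    rw [hw, Complex.ofReal_re]
    nlinarith [Real.sq_sqrt (show (0 : ℝ) ≤ 6 by norm_num), Real.sqrt_nonneg 6]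

noncomputable def ω : ℂ := Complex.exp (2 * Real.pi * Complex.I / 3)

theorem isPrimitiveRoot_ω : IsPrimitiveRoot ω 3 := Complex.isPrimitiveRoot_exp 3 (by norm_num)

theorem ω_sq_add_ω_add_one : ω ^ 2 + ω + 1 = 0 := by
  have h := isPrimitiveRoot_ω.geom_sum_eq_zero (by norm_num)
  simp only [Finset.sum_range_succ, Finset.sum_range_zero] at h
  linear_combination h

theorem star_ω_mul_ω : star ω * ω = 1 := by
  rw [Complex.star_def, Complex.conj_mul', isPrimitiveRoot_ω.norm'_eq_one (by norm_num)]
  simp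

noncomputable def ωUnit : ℂˣ := (isPrimitiveRoot_ω.isUnit (by norm_num)).unit

theorem star_single_vecMul_gramJ_dotProduct_self (i : Fin 3) :
    star (Pi.single i 1 : Fin 3 → ℂ) ᵥ* gramJ ⬝ᵥ Pi.single i 1 = 1 := by
  rw [star_single_vecMul_dotProduct_single]
  fin_cases i <;> simp [gramJ]

noncomputable def mirror (i : Fin 3) : GL (Fin 3) ℂ :=
  Units.map (complexReflectionHom (star_single_vecMul_gramJ_dotProduct_self i)) ωUnit

theorem coe_mirror (i : Fin 3) :
    (mirror i : Matrix (Fin 3) (Fin 3) ℂ) = complexReflection gramJ (Pi.single i 1) ω :=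
  rfl

theorem mirror_pow_three (i : Fin 3) : mirror i ^ 3 = 1 := by
  have h : ωUnit ^ 3 = 1 := Units.ext isPrimitiveRoot_ω.pow_eq_one
  rw [mirror, ← map_pow, h, map_one]

theorem commute_mirror_two_zero : Commute (mirror 2) (mirror 0) := by
  rw [← Commute.units_val_iff, coe_mirror, coe_mirror]
  apply commute_complexReflection <;> simp [gramJ]

theorem mirror_braid {i j : Fin 3} (hij : gramJ i j = σ) (hji : gramJ j i = σ) :
    (mirror i * mirror j) ^ 2 = (mirror j * mirror i) ^ 2 := by
  apply Units.ext
  simp only [Units.val_pow_eq_pow_val, Units.val_mul, coe_mirror]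
  apply complexReflection_braid (star_single_vecMul_gramJ_dotProduct_self i)
    (star_single_vecMul_gramJ_dotProduct_self j)
  rw [star_single_vecMul_dotProduct_single, star_single_vecMul_dotProduct_single,
    hij, hji]
  linear_combination
    (ω - 1) ^ 4 * sq_sqrt_six_div_three + 2 / 3 * (ω - 1) ^ 2 * ω_sq_add_ω_add_one

noncomputable def generatorImage : Fin 3 → GL (Fin 3) ℂ := ![mirror 0, mirror 2, mirror 1]

theorem generatorImage_relators : ∀ r ∈ g64848Rels, FreeGroup.lift generatorImage r = 1 := by
  have braid_rel {x y : GL (Fin 3) ℂ} (h : (x * y) ^ 2 = (y * x) ^ 2) :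
      (x * y) ^ 2 * (x⁻¹ * y⁻¹) ^ 2 = 1 := by
    rw [h, ← _root_.mul_inv_rev, inv_pow, mul_inv_cancel]
  simp only [g64848Rels, Set.mem_insert_iff, Set.mem_singleton_iff]
  rintro r (rfl | rfl | rfl | rfl | rfl | rfl) <;>
    simp only [map_mul, map_pow, map_inv, FreeGroup.lift_apply_of, generatorImage, cons_val]
  · exact mirror_pow_three 0
  · exact mirror_pow_three 2
  · exact mirror_pow_three 1
  · exact commutatorElement_eq_one_iff_commute.2 commute_mirror_two_zero
  · exact braid_rel (mirror_braid (by simp [gramJ]) (by simp [gramJ]))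
  · exact braid_rel (mirror_braid (by simp [gramJ]) (by simp [gramJ]))

noncomputable def rho : PresentedGroup g64848Rels →* GL (Fin 3) ℂ :=
  PresentedGroup.toGroup generatorImage_relators

theorem rho_of (i : Fin 3) : rho (PresentedGroup.of i) = generatorImage i :=
  PresentedGroup.toGroup.of generatorImage_relators

theorem mirror_mem_isometryGroup (i : Fin 3) : mirror i ∈ isometryGroup gramJ :=
  conjTranspose_complexReflection_mul_mul gramJ_isHermitian
    (star_single_vecMul_gramJ_dotProduct_self i) star_ω_mul_ω

theorem rho_mem_isometryGroup (g : PresentedGroup g64848Rels) : rho g ∈ isometryGroup gramJ := by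
  suffices h : ⊤ ≤ (isometryGroup gramJ).comap rho from h trivial
  rw [← PresentedGroup.closure_range_of, Subgroup.closure_le]
  rintro _ ⟨i, rfl⟩
  rw [SetLike.mem_coe, Subgroup.mem_comap, rho_of]
  fin_cases i <;> exact mirror_mem_isometryGroup _

theorem rho_irreducible (W : Submodule ℂ (Fin 3 → ℂ))
    (hW : ∀ g : PresentedGroup g64848Rels, ∀ v ∈ W, (rho g : Matrix (Fin 3) (Fin 3) ℂ) *ᵥ v ∈ W) :
    W = ⊥ ∨ W = ⊤ := by
  have hgen (k : Fin 3) : ∀ v ∈ W, (generatorImage k : Matrix (Fin 3) (Fin 3) ℂ) *ᵥ v ∈ W := by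
    simpa only [rho_of] using hW (.of k)
  have hmirror (i : Fin 3) : ∀ v ∈ W, (mirror i : Matrix (Fin 3) (Fin 3) ℂ) *ᵥ v ∈ W := by
    fin_cases i
    exacts [hgen 0, hgen 2, hgen 1]
  have single_mem {i : Fin 3} {v : Fin 3 → ℂ} (hv : v ∈ W) (hvi : (gramJ *ᵥ v) i ≠ 0) :
      Pi.single i 1 ∈ W :=
    mem_of_complexReflection_mulVec_mem (isPrimitiveRoot_ω.ne_one (by norm_num)) (hmirror i) hv
      (by rwa [star_single_vecMul_dotProduct])
  have spread {i j : Fin 3} (hi : Pi.single i 1 ∈ W) (hij : gramJ j i ≠ 0) : Pi.single j 1 ∈ W :=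
    single_mem hi (by rwa [mulVec_single_one])
  by_cases hbot : W = ⊥
  · exact Or.inl hbot
  right
  obtain ⟨v, hv, hv0⟩ := Submodule.exists_mem_ne_zero_of_ne_bot hbot
  have hJv : gramJ *ᵥ v ≠ 0 := fun h =>
    hv0 (eq_zero_of_mulVec_eq_zero (by rw [det_gramJ]; norm_num) h)
  obtain ⟨i, hi⟩ := Function.ne_iff.1 hJv
  have h1 : Pi.single 1 1 ∈ W := by
    fin_cases i
    · exact spread (single_mem hv hi) (by simp [gramJ])
    · exact single_mem hv hi
    · exact spread (single_mem hv hi) (by simp [gramJ])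
  refine Submodule.eq_top_of_forall_single_mem fun j => ?_
  fin_cases j
  · exact spread h1 (by simp [gramJ])
  · exact h1
  · exact spread h1 (by simp [gramJ])

theorem mirror_zero_mulVec (x y z : ℂ) :
    (mirror 0 : Matrix (Fin 3) (Fin 3) ℂ) *ᵥ ![x, y, z] = ![x + (ω - 1) * (x + σ * y), y, z] := by
  rw [coe_mirror, complexReflection_mulVec, star_single_vecMul_dotProduct, gramJ_mulVec_cons]
  ext i
  fin_cases i <;> simp

theorem mirror_one_mulVec (x y z : ℂ) :
    (mirror 1 : Matrix (Fin 3) (Fin 3) ℂ) *ᵥ ![x, y, z] =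
      ![x, y + (ω - 1) * (σ * x + y + σ * z), z] := by
  rw [coe_mirror, complexReflection_mulVec, star_single_vecMul_dotProduct, gramJ_mulVec_cons]
  ext i
  fin_cases i <;> simp

theorem mirror_two_mulVec (x y z : ℂ) :
    (mirror 2 : Matrix (Fin 3) (Fin 3) ℂ) *ᵥ ![x, y, z] = ![x, y, z + (ω - 1) * (σ * y + z)] := by
  rw [coe_mirror, complexReflection_mulVec, star_single_vecMul_dotProduct, gramJ_mulVec_cons]
  ext i
  fin_cases i <;> simp

open PresentedGroup in
def loxodromic : PresentedGroup g64848Rels := of 0 * of 1 * of 2 * of 2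

noncomputable def loxodromicEigenvector : Fin 3 → ℂ :=
  ![1, σ / 4 * (-7 + ((Real.sqrt 5 : ℝ) : ℂ) + ω * (1 - ((Real.sqrt 5 : ℝ) : ℂ))), 1]

theorem rho_loxodromic_mulVec :
    (rho loxodromic : Matrix (Fin 3) (Fin 3) ℂ) *ᵥ loxodromicEigenvector =
      (((3 + Real.sqrt 5) / 2 : ℝ) : ℂ) • loxodromicEigenvector := by
  have hω := ω_sq_add_ω_add_one
  have hσ := sq_sqrt_six_div_three
  have h5 : ((Real.sqrt 5 : ℝ) : ℂ) ^ 2 = 5 := by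
    norm_cast
    exact Real.sq_sqrt (by norm_num)
  simp only [loxodromic, map_mul, rho_of, generatorImage, cons_val, Units.val_mul, ← mulVec_mulVec,
    loxodromicEigenvector, mirror_zero_mulVec, mirror_one_mulVec, mirror_two_mulVec]
  rw [show (((3 + Real.sqrt 5) / 2 : ℝ) : ℂ) = (3 + ((Real.sqrt 5 : ℝ) : ℂ)) / 2 by push_cast; rfl]
  generalize σ = s at hσ ⊢
  generalize ((Real.sqrt 5 : ℝ) : ℂ) = r at h5 ⊢
  ext i
  fin_cases i <;>
    simp only [Fin.zero_eta, Fin.mk_one, Fin.reduceFinMk, cons_val, Pi.smul_apply, smul_eq_mul] <;>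
    grind

theorem one_lt_norm_three_add_sqrt_five_div_two : 1 < ‖(((3 + Real.sqrt 5) / 2 : ℝ) : ℂ)‖ := by
  rw [Complex.norm_real, Real.norm_of_nonneg (by positivity)]
  linarith [Real.sqrt_nonneg 5]

theorem loxodromicEigenvector_ne_zero : loxodromicEigenvector ≠ 0 := fun h => by
  simpa [loxodromicEigenvector] using congrFun h 0

/-- The Hermitian matrix J is invertible and indefinite, and the trivalent triangle group
Γ = G₀^{6,48,48} admits a representation ρ : Γ → GL₃(ℂ) preserving the Hermitian form
with Gram matrix J (i.e. landing in the unitary group U(2,1) of J), acting irreducibly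
on ℂ³, and whose image does not have compact closure. -/
theorem g64848_complex_hyperbolic_rep :
    IsUnit gramJ ∧
    (∃ v w : Fin 3 → ℂ,
      0 < (dotProduct (star v) (Matrix.mulVec gramJ v)).re ∧
      (dotProduct (star w) (Matrix.mulVec gramJ w)).re < 0) ∧
    ∃ ρ : PresentedGroup g64848Rels →* Matrix.GeneralLinearGroup (Fin 3) ℂ,
      (∀ g : PresentedGroup g64848Rels,
        Matrix.conjTranspose (↑(ρ g) : Matrix (Fin 3) (Fin 3) ℂ) * gramJ *
          (↑(ρ g) : Matrix (Fin 3) (Fin 3) ℂ) = gramJ) ∧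
      (∀ W : Submodule ℂ (Fin 3 → ℂ),
        (∀ (g : PresentedGroup g64848Rels), ∀ v ∈ W,
          Matrix.mulVec (↑(ρ g) : Matrix (Fin 3) (Fin 3) ℂ) v ∈ W) →
        W = ⊥ ∨ W = ⊤) ∧
      ¬ IsCompact (closure (Set.range ρ : Set (Matrix.GeneralLinearGroup (Fin 3) ℂ))) := by
  refine ⟨isUnit_gramJ, gramJ_indefinite, rho, rho_mem_isometryGroup, rho_irreducible, ?_⟩
  exact not_isCompact_closure_of_pow_mem (fun k => ⟨loxodromic ^ k, map_pow rho _ k⟩)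
    loxodromicEigenvector_ne_zero rho_loxodromic_mulVec one_lt_norm_three_add_sqrt_five_div_two
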